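/- arXiv:2411.16101 — 4 statements merged into one kernel-verified Lean document; each statement's English description precedes it below -/
import Mathlib

section
/- Let A have linearly independent unit columns and let A' = orth(A, i, j) be obtained by replacing column a_i with the unit vector in the direction of a_i − ⟨a_i, a_j⟩ a_j. Then d_i(A') = d_i(A)/√(1 − |⟨a_i, a_j⟩|²), in particular d_i(A') ≥ d_i(A). -/
open Matrix

noncomputable def col {n : ℕ} (A : Matrix (Fin n) (Fin n) ℂ) (j : Fin n) :
    EuclideanSpace ℂ (Fin n) := WithLp.toLp 2 (fun i => A i j)

noncomputable def dcol {n : ℕ} (A : Matrix (Fin n) (Fin n) ℂ) (j : Fin n) : ℝ :=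
  Metric.infDist (_root_.col A j)
    ((Submodule.span ℂ (_root_.col A '' {k | k ≠ j}) : Submodule ℂ (EuclideanSpace ℂ (Fin n))) : Set (EuclideanSpace ℂ (Fin n)))

noncomputable def Phi {n : ℕ} (A : Matrix (Fin n) (Fin n) ℂ) : ℝ :=
  -∑ j, Real.log (dcol A j)

noncomputable def orth {n : ℕ} (A : Matrix (Fin n) (Fin n) ℂ) (i j : Fin n) :
    Matrix (Fin n) (Fin n) ℂ :=
  Matrix.updateCol A i
    (WithLp.ofLp ((‖_root_.col A i - (inner ℂ (_root_.col A j) (_root_.col A i) : ℂ) • _root_.col A j‖ : ℂ)⁻¹ •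
      (_root_.col A i - (inner ℂ (_root_.col A j) (_root_.col A i) : ℂ) • _root_.col A j)))

noncomputable def sMin {n : ℕ} (A : Matrix (Fin n) (Fin n) ℂ) : ℝ :=
  Real.sqrt (⨅ i, (Matrix.isHermitian_conjTranspose_mul_self A).eigenvalues i)

noncomputable def sMax {n : ℕ} (A : Matrix (Fin n) (Fin n) ℂ) : ℝ :=
  Real.sqrt (⨆ i, (Matrix.isHermitian_conjTranspose_mul_self A).eigenvalues i)

noncomputable def condNum {n : ℕ} (A : Matrix (Fin n) (Fin n) ℂ) : ℝ := sMax A / sMin A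

noncomputable def frobSq {n : ℕ} (A : Matrix (Fin n) (Fin n) ℂ) : ℝ :=
  ∑ i, ∑ j, ‖A i j‖ ^ 2

open Pointwise

section Aux

variable {E : Type*} [NormedAddCommGroup E] [NormedSpace ℂ E]

lemma aux_smul_set (S : Submodule ℂ E) {a : ℂ} (ha : a ≠ 0) : a • (S : Set E) = (S : Set E) := by
  ext x
  constructor
  · rintro ⟨y, hy, rfl⟩; exact S.smul_mem a hy
  · intro hx
    exact ⟨a⁻¹ • x, S.smul_mem _ hx, by simp [smul_smul, mul_inv_cancel₀ ha]⟩

lemma aux_infDist_add (S : Submodule ℂ E) (x t : E) (ht : t ∈ S) :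
    Metric.infDist (x + t) (S : Set E) = Metric.infDist x (S : Set E) := by
  have hiso : Isometry (fun y : E => y + t) := Isometry.of_dist_eq fun a b => dist_add_right a b t
  have himg : (fun y : E => y + t) '' (S : Set E) = (S : Set E) := by
    ext x
    simp only [Set.mem_image, SetLike.mem_coe]
    constructor
    · rintro ⟨y, hy, rfl⟩; exact S.add_mem hy ht
    · intro hx; exact ⟨x - t, S.sub_mem hx ht, sub_add_cancel x t⟩
  have h := Metric.infDist_image hiso (x := x) (t := (S : Set E))
  rwa [himg] at h

end Aux

theorem stmt1 {n : ℕ} (A : Matrix (Fin n) (Fin n) ℂ)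
    (hli : LinearIndependent ℂ (_root_.col A)) (hunit : ∀ k, ‖_root_.col A k‖ = 1)
    (i j : Fin n) (hij : i ≠ j) :
    dcol (orth A i j) i
        = dcol A i / Real.sqrt (1 - ‖(inner ℂ (_root_.col A j) (_root_.col A i) : ℂ)‖ ^ 2) ∧
      dcol A i ≤ dcol (orth A i j) i := by
  classical
  set v : EuclideanSpace ℂ (Fin n) := col A i with hv
  set u : EuclideanSpace ℂ (Fin n) := col A j with hu
  set c : ℂ := (inner ℂ u v : ℂ) with hc
  set w : EuclideanSpace ℂ (Fin n) := v - c • u with hwdef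
  set S : Submodule ℂ (EuclideanSpace ℂ (Fin n)) := Submodule.span ℂ (col A '' {k | k ≠ i})
    with hS
  -- w ≠ 0
  have hw0 : w ≠ 0 := by
    intro h
    have hvi : v = c • u := by rwa [sub_eq_zero] at h
    have hmem : _root_.col A i ∈ Submodule.span ℂ (_root_.col A '' ({j} : Set (Fin n))) := by
      rw [Set.image_singleton]
      rw [show _root_.col A i = c • _root_.col A j from hvi]
      exact Submodule.smul_mem _ _ (Submodule.subset_span rfl)
    exact hli.notMem_span_image (by simp [hij]) hmem
  have hwpos : 0 < ‖w‖ := norm_pos_iff.mpr hw0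
  -- norm computation
  have hwnormsq : ‖w‖ ^ 2 = 1 - ‖c‖ ^ 2 := by
    have h1 : ‖w‖ ^ 2 = ‖v‖ ^ 2 - 2 * RCLike.re ((inner ℂ v (c • u)) : ℂ) + ‖c • u‖ ^ 2 :=
      norm_sub_sq (𝕜 := ℂ) v (c • u)
    have h2 : (inner ℂ v (c • u) : ℂ) = c * (starRingEnd ℂ) c := by
      rw [inner_smul_right, ← inner_conj_symm, ← hc]
    rw [h2] at h1
    have h3 : RCLike.re (c * (starRingEnd ℂ) c) = ‖c‖ ^ 2 := by
      rw [RCLike.mul_conj]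
      simp [← Complex.ofReal_pow]
    rw [h3, norm_smul, hunit i, hunit j] at h1
    simp at h1
    rw [h1]; ring
  have hsqrt : Real.sqrt (1 - ‖c‖ ^ 2) = ‖w‖ := by
    rw [← hwnormsq, Real.sqrt_sq hwpos.le]
  -- columns of the new matrix
  have hcolsame : ∀ k ∈ {k : Fin n | k ≠ i}, _root_.col (orth A i j) k = _root_.col A k := by
    intro k hk
    have hk' : k ≠ i := hk
    ext r
    show (orth A i j) r k = A r k
    rw [orth, Matrix.updateCol_apply, if_neg hk']
  have hspan : Submodule.span ℂ (_root_.col (orth A i j) '' {k | k ≠ i}) = S := by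
    rw [hS]
    congr 1
    exact Set.image_congr hcolsame
  have hcoli : _root_.col (orth A i j) i = (‖w‖ : ℂ)⁻¹ • w := by
    ext r
    show (orth A i j) r i = _
    rw [orth, Matrix.updateCol_self]
  -- u ∈ S
  have hus : u ∈ S := Submodule.subset_span ⟨j, Ne.symm hij, rfl⟩
  have htr : Metric.infDist w (S : Set (EuclideanSpace ℂ (Fin n)))
      = Metric.infDist v (S : Set (EuclideanSpace ℂ (Fin n))) := by
    rw [show w = v + -(c • u) by rw [hwdef, sub_eq_add_neg]]
    exact aux_infDist_add S v _ (S.neg_mem (S.smul_mem c hus))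
  have ha : ((‖w‖ : ℂ))⁻¹ ≠ 0 := by
    simp [Complex.ofReal_ne_zero, hwpos.ne']
  have key : dcol (orth A i j) i = ‖w‖⁻¹ * dcol A i := by
    show Metric.infDist (_root_.col (orth A i j) i) _ = _
    rw [hcoli, hspan]
    have hsmul := infDist_smul₀ ha (S : Set (EuclideanSpace ℂ (Fin n))) w
    rw [aux_smul_set S ha] at hsmul
    rw [hsmul, htr]
    congr 1
    simp [abs_of_nonneg hwpos.le]
  have hd0 : 0 ≤ dcol A i := Metric.infDist_nonneg
  have hwle1 : ‖w‖ ≤ 1 := by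
    nlinarith [hwnormsq, sq_nonneg ‖c‖, norm_nonneg w]
  constructor
  · rw [key, hsqrt, div_eq_inv_mul]
  · rw [key, inv_mul_eq_div, le_div_iff₀ hwpos]
    exact mul_le_of_le_one_right hd0 hwle1
end

section
/- If A is an n×n complex matrix with unit-length columns, then ‖A*A − I‖_F² ≥ (n/(n−1)) · (1 − σ_n(A)²)², where σ_n(A) is the smallest singular value of A. -/
open Matrix

open Finset

lemma key_ineq {n : ℕ} (hn : 2 ≤ n) (f : Fin n → ℝ) (i0 : Fin n)
    (hsum : ∑ i, f i = n) :
    (n : ℝ) / ((n : ℝ) - 1) * (1 - f i0) ^ 2 ≤ ∑ i, (f i - 1) ^ 2 := by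
  have hcard : ((univ.erase i0).card : ℝ) = (n : ℝ) - 1 := by
    rw [Finset.card_erase_of_mem (mem_univ i0), Finset.card_univ, Fintype.card_fin]
    rw [Nat.cast_sub (by omega)]; norm_num
  have hs : ∑ i ∈ univ.erase i0, (f i - 1) = 1 - f i0 := by
    have h0 : ∑ i, (f i - 1) = 0 := by
      rw [Finset.sum_sub_distrib, hsum]; simp
    have h1 := Finset.sum_erase_add univ (fun i => f i - 1) (mem_univ i0)
    linarith [h1.trans h0]
  have hC := sq_sum_le_card_mul_sum_sq (s := univ.erase i0) (f := fun i => f i - 1)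
  rw [hs, hcard] at hC
  have hsplit := Finset.sum_erase_add univ (fun i => (f i - 1) ^ 2) (mem_univ i0)
  have hn1 : (1 : ℝ) ≤ (n : ℝ) - 1 := by
    have : (2 : ℝ) ≤ n := by exact_mod_cast hn
    linarith
  rw [div_mul_eq_mul_div, div_le_iff₀ (by linarith)]
  nlinarith [sq_nonneg (1 - f i0), hC, hsplit]

lemma trace_conjT_mul {n : ℕ} (M : Matrix (Fin n) (Fin n) ℂ) :
    Matrix.trace (Mᴴ * M) = ((frobSq M : ℝ) : ℂ) := by
  simp only [Matrix.trace, Matrix.diag, Matrix.mul_apply, Matrix.conjTranspose_apply, frobSq]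
  rw [Finset.sum_comm]
  push_cast
  refine Finset.sum_congr rfl fun i _ => Finset.sum_congr rfl fun j _ => ?_
  rw [show star (M i j) = (starRingEnd ℂ) (M i j) from rfl, mul_comm, Complex.mul_conj,
    Complex.normSq_eq_norm_sq, Complex.ofReal_pow]

theorem stmt3 {n : ℕ} (hn : 2 ≤ n) (A : Matrix (Fin n) (Fin n) ℂ)
    (hunit : ∀ j, ‖_root_.col A j‖ = 1) :
    (n : ℝ) / ((n : ℝ) - 1) * (1 - sMin A ^ 2) ^ 2 ≤ frobSq (Aᴴ * A - 1) := by
  classical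
  have hne : Nonempty (Fin n) := ⟨⟨0, by omega⟩⟩
  set hB := Matrix.isHermitian_conjTranspose_mul_self A with hBdef
  set f : Fin n → ℝ := hB.eigenvalues with hfdef
  set U : Matrix (Fin n) (Fin n) ℂ := (hB.eigenvectorUnitary : Matrix (Fin n) (Fin n) ℂ) with hUdef
  have hUU' : Uᴴ * U = 1 := by
    rw [← Matrix.star_eq_conjTranspose]
    exact Matrix.mem_unitaryGroup_iff'.mp (hB.eigenvectorUnitary).2
  have hUU2 : U * Uᴴ = 1 := by
    rw [← Matrix.star_eq_conjTranspose]
    exact Matrix.mem_unitaryGroup_iff.mp (hB.eigenvectorUnitary).2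
  set D : Matrix (Fin n) (Fin n) ℂ := Matrix.diagonal (fun i => (f i : ℂ)) with hDdef
  have hspec : Aᴴ * A = U * D * Uᴴ := by
    have := hB.spectral_theorem
    rw [Unitary.conjStarAlgAut_apply, Matrix.star_eq_conjTranspose] at this
    exact this
  -- trace of U * X * Uᴴ equals trace X
  have htrc : ∀ X : Matrix (Fin n) (Fin n) ℂ,
      Matrix.trace (U * X * Uᴴ) = Matrix.trace X := by
    intro X
    rw [Matrix.trace_mul_cycle, hUU', Matrix.one_mul]
  set D' : Matrix (Fin n) (Fin n) ℂ := Matrix.diagonal (fun i => (f i : ℂ) - 1) with hD'def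
  have hM : Aᴴ * A - 1 = U * D' * Uᴴ := by
    have hdiag : D' = D - 1 := by
      rw [hD'def, hDdef, ← Matrix.diagonal_one, Matrix.diagonal_sub]
    rw [hdiag, Matrix.mul_sub, Matrix.sub_mul, Matrix.mul_one, hUU2, ← hspec]
  have hMconj : (U * D' * Uᴴ)ᴴ * (U * D' * Uᴴ) = U * (D'ᴴ * D') * Uᴴ := by
    simp only [Matrix.conjTranspose_mul, Matrix.conjTranspose_conjTranspose, Matrix.mul_assoc]
    rw [show Uᴴ * (U * (D' * Uᴴ)) = D' * Uᴴ by
      rw [← Matrix.mul_assoc, hUU', Matrix.one_mul]]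
  -- frobSq identity
  have hfrob : ((frobSq (Aᴴ * A - 1) : ℝ) : ℂ) = ((∑ i, (f i - 1) ^ 2 : ℝ) : ℂ) := by
    rw [← trace_conjT_mul, hM, hMconj, htrc]
    rw [hD'def, Matrix.diagonal_conjTranspose, Matrix.diagonal_mul_diagonal,
      Matrix.trace_diagonal]
    push_cast
    refine Finset.sum_congr rfl fun i _ => ?_
    simp only [Pi.star_apply, star_sub, star_one, Complex.star_def, Complex.conj_ofReal]
    ring
  have hfrob' : frobSq (Aᴴ * A - 1) = ∑ i, (f i - 1) ^ 2 :=
    Complex.ofReal_injective hfrob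
  -- sum of eigenvalues equals n
  have hsumf : ∑ i, f i = n := by
    have h1 : ((frobSq A : ℝ) : ℂ) = ((∑ i, f i : ℝ) : ℂ) := by
      rw [← trace_conjT_mul, hspec, htrc, hDdef, Matrix.trace_diagonal]
      push_cast
      rfl
    have h2 : frobSq A = ∑ i, f i := Complex.ofReal_injective h1
    have h3 : frobSq A = (n : ℝ) := by
      rw [frobSq, Finset.sum_comm]
      have : ∀ j : Fin n, ∑ i, ‖A i j‖ ^ 2 = 1 := by
        intro j
        have hc : ‖_root_.col A j‖ ^ 2 = ∑ i, ‖A i j‖ ^ 2 := by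
          rw [EuclideanSpace.norm_eq, Real.sq_sqrt (by positivity)]
          rfl
        rw [← hc, hunit j, one_pow]
      calc ∑ j : Fin n, ∑ i : Fin n, ‖A i j‖ ^ 2 = ∑ _j : Fin n, (1 : ℝ) :=
            Finset.sum_congr rfl fun j _ => this j
        _ = (n : ℝ) := by simp
    rw [← h2, h3]
  -- the argmin
  obtain ⟨i0, -, hi0⟩ := Finset.exists_min_image univ f univ_nonempty
  have hinf : ⨅ i, f i = f i0 :=
    le_antisymm (ciInf_le (Set.Finite.bddBelow (Set.finite_range f)) i0)
      (le_ciInf fun i => hi0 i (mem_univ i))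
  have hsq : sMin A ^ 2 = f i0 := by
    have h0 : 0 ≤ f i0 := Matrix.eigenvalues_conjTranspose_mul_self_nonneg A i0
    have hrfl : sMin A = Real.sqrt (⨅ i, f i) := rfl
    rw [hrfl, hinf, Real.sq_sqrt h0]
  rw [hsq, hfrob']
  exact key_ineq hn f i0 hsumf
end

section
/- For any invertible A ∈ ℂ^{n×n} with unit-length columns satisfying 2Φ(A) < 1, the condition number satisfies κ(A) ≤ (1 + √(2Φ(A)))/(1 − √(2Φ(A))). -/
open Matrix

/-! ### Auxiliary material -/

instance finWFLT (n : ℕ) : WellFoundedLT (Fin n) := inferInstance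

/-- squared Euclidean norm as a sum of squares -/
lemma normsq_eq {n : ℕ} (x : EuclideanSpace ℂ (Fin n)) : ‖x‖ ^ 2 = ∑ i, ‖x i‖ ^ 2 := by
  rw [EuclideanSpace.norm_eq, Real.sq_sqrt]
  positivity

lemma rayleigh {n : ℕ} (A : Matrix (Fin n) (Fin n) ℂ) (i : Fin n) :
    (Matrix.isHermitian_conjTranspose_mul_self A).eigenvalues i
      = ∑ k, ‖(A *ᵥ ⇑((Matrix.isHermitian_conjTranspose_mul_self A).eigenvectorBasis i)) k‖ ^ 2 := by
  set hH := Matrix.isHermitian_conjTranspose_mul_self A with hHdef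
  set v := ⇑(hH.eigenvectorBasis i) with hvdef
  have hvnorm : star v ⬝ᵥ v = 1 := by
    have hn : ‖(hH.eigenvectorBasis i : EuclideanSpace ℂ (Fin n))‖ = 1 :=
      hH.eigenvectorBasis.orthonormal.1 i
    have := inner_self_eq_norm_sq_to_K (𝕜 := ℂ) (hH.eigenvectorBasis i : EuclideanSpace ℂ (Fin n))
    rw [hn] at this
    rw [EuclideanSpace.inner_eq_star_dotProduct] at this
    rw [dotProduct_comm]
    simpa using this
  have key : star (A *ᵥ v) ⬝ᵥ (A *ᵥ v) = (hH.eigenvalues i : ℂ) := by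
    rw [star_mulVec, ← dotProduct_mulVec, mulVec_mulVec, hH.mulVec_eigenvectorBasis,
      dotProduct_smul]
    rw [hvnorm]
    simp [RCLike.real_smul_eq_coe_mul]
  have lhs : star (A *ᵥ v) ⬝ᵥ (A *ᵥ v) = ((∑ k, ‖(A *ᵥ v) k‖ ^ 2 : ℝ) : ℂ) := by
    rw [dotProduct]
    push_cast
    apply Finset.sum_congr rfl
    intro k _
    rw [Pi.star_apply, Complex.star_def, ← Complex.normSq_eq_conj_mul_self]
    rw [← Complex.sq_norm]
    norm_cast
  have := lhs.symm.trans key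
  exact_mod_cast (Complex.ofReal_inj.mp this).symm

/-- Cauchy-Schwarz bound for mulVec -/
lemma mulVec_normsq_le {n : ℕ} (M : Matrix (Fin n) (Fin n) ℂ) (x : Fin n → ℂ) :
    ∑ i, ‖(M *ᵥ x) i‖ ^ 2 ≤ (∑ j, ∑ i, ‖M i j‖ ^ 2) * ∑ j, ‖x j‖ ^ 2 := by
  rw [Finset.sum_comm, Finset.sum_mul]
  apply Finset.sum_le_sum
  intro i _
  calc ‖(M *ᵥ x) i‖ ^ 2 ≤ (∑ j, ‖M i j‖ * ‖x j‖) ^ 2 := by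
        apply pow_le_pow_left₀ (norm_nonneg _)
        calc ‖(M *ᵥ x) i‖ = ‖∑ j, M i j * x j‖ := rfl
          _ ≤ ∑ j, ‖M i j * x j‖ := norm_sum_le _ _
          _ = ∑ j, ‖M i j‖ * ‖x j‖ := by simp [norm_mul]
    _ ≤ (∑ j, ‖M i j‖ ^ 2) * ∑ j, ‖x j‖ ^ 2 :=
        Finset.sum_mul_sq_le_sq_mul_sq _ _ _

set_option maxHeartbeats 2000000 in
theorem stmt13 {n : ℕ} (A : Matrix (Fin n) (Fin n) ℂ)
    (hli : LinearIndependent ℂ (_root_.col A)) (hunit : ∀ j, ‖_root_.col A j‖ = 1)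
    (hsmall : 2 * Phi A < 1) :
    condNum A ≤ (1 + Real.sqrt (2 * Phi A)) / (1 - Real.sqrt (2 * Phi A)) := by
  rcases Nat.eq_zero_or_pos n with hn | hn
  · subst hn
    have h1 : condNum A = 0 := by
      simp [condNum, sMax, sMin, iSup_of_empty, Real.sSup_empty]
    have h2 : Phi A = 0 := by simp [Phi]
    rw [h1, h2]
    norm_num
  haveI : Nonempty (Fin n) := Fin.pos_iff_nonempty.mp hn
  -- Gram-Schmidt setup
  have h0 : Module.finrank ℂ (EuclideanSpace ℂ (Fin n)) = Fintype.card (Fin n) :=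
    finrank_euclideanSpace
  set q : OrthonormalBasis (Fin n) ℂ (EuclideanSpace ℂ (Fin n)) :=
    InnerProductSpace.gramSchmidtOrthonormalBasis h0 (_root_.col A) with hqdef
  set g : Fin n → EuclideanSpace ℂ (Fin n) := InnerProductSpace.gramSchmidt ℂ (_root_.col A) with hgdef
  have hgne : ∀ j, g j ≠ 0 := fun j => InnerProductSpace.gramSchmidt_ne_zero j hli
  have hq : ∀ j, q j = (‖g j‖ : ℂ)⁻¹ • g j := by
    intro j
    rw [hqdef, InnerProductSpace.gramSchmidtOrthonormalBasis_apply]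
    · rfl
    · rw [InnerProductSpace.gramSchmidtNormed]
      simp [hgne j, norm_ne_zero_iff.mpr (hgne j)]
      exact hgne j
  set r : Fin n → ℝ := fun j => ‖g j‖ with hrdef
  have hrpos : ∀ j, 0 < r j := fun j => norm_pos_iff.mpr (hgne j)
  set R : Matrix (Fin n) (Fin n) ℂ := fun i j => q.repr (_root_.col A j) i with hRdef
  -- Parseval : columns of R have norm 1
  have hcolnorm : ∀ j, ∑ i, ‖R i j‖ ^ 2 = 1 := by
    intro j
    have : ∑ i, ‖R i j‖ ^ 2 = ‖q.repr (_root_.col A j)‖ ^ 2 := (normsq_eq _).symm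
    rw [this, q.repr.norm_map, hunit j, one_pow]
  -- diagonal of R
  have hdiag : ∀ j, R j j = (r j : ℂ) := by
    intro j
    have hrepr : R j j = inner ℂ (q j) (_root_.col A j) := q.repr_apply_apply (_root_.col A j) j
    have hgs := InnerProductSpace.gramSchmidt_def' ℂ (_root_.col A) j
    rw [← hgdef] at hgs
    have hqg : (inner ℂ (q j) (g j) : ℂ) = (r j : ℂ) := by
      rw [hq j, inner_smul_left, inner_self_eq_norm_sq_to_K]
      rw [map_inv₀, Complex.conj_ofReal]
      rw [hrdef]
      push_cast
      have : (‖g j‖ : ℂ) ≠ 0 := by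
        exact_mod_cast Complex.ofReal_ne_zero.mpr (norm_ne_zero_iff.mpr (hgne j))
      field_simp
      ring
      rfl
    have hzero : ∀ i ∈ Finset.Iio j,
        (inner ℂ (q j) ((ℂ ∙ g i).starProjection (_root_.col A j)) : ℂ)
          = 0 := by
      intro i hi
      obtain ⟨c, hc⟩ := Submodule.mem_span_singleton.mp
        ((ℂ ∙ g i).starProjection_apply_mem (_root_.col A j))
      rw [← hc, inner_smul_right, hq j, inner_smul_left]
      rw [hgdef, InnerProductSpace.gramSchmidt_orthogonal ℂ (_root_.col A) (Finset.mem_Iio.mp hi).ne']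
      ring
    rw [hrepr]
    calc (inner ℂ (q j) (_root_.col A j) : ℂ)
        = inner ℂ (q j) (g j + ∑ i ∈ Finset.Iio j,
            ((ℂ ∙ g i).starProjection (_root_.col A j))) := by
          rw [← hgs]
      _ = inner ℂ (q j) (g j) + ∑ i ∈ Finset.Iio j,
            (inner ℂ (q j) ((ℂ ∙ g i).starProjection (_root_.col A j)) : ℂ) := by
          rw [inner_add_right, inner_sum]
      _ = (r j : ℂ) := by
          rw [hqg, Finset.sum_eq_zero hzero, add_zero]
  -- r j ≤ 1
  have hrle : ∀ j, r j ≤ 1 := by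
    intro j
    have h1 : ‖R j j‖ ^ 2 ≤ ∑ i, ‖R i j‖ ^ 2 :=
      Finset.single_le_sum (f := fun i => ‖R i j‖ ^ 2) (fun i _ => by positivity)
        (Finset.mem_univ j)
    rw [hcolnorm j, hdiag j] at h1
    have h2 : ‖((r j : ℝ) : ℂ)‖ = r j := by
      rw [Complex.norm_real, Real.norm_eq_abs, abs_of_nonneg (hrpos j).le]
    rw [h2] at h1
    nlinarith [hrpos j]
  -- dcol ≤ r
  have hdle : ∀ j, dcol A j ≤ r j := by
    intro j
    set w : EuclideanSpace ℂ (Fin n) :=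
      ∑ i ∈ Finset.Iio j, ((ℂ ∙ g i).starProjection (_root_.col A j))
      with hwdef
    have hwmem : w ∈ Submodule.span ℂ (_root_.col A '' {k | k ≠ j}) := by
      have h1 : w ∈ Submodule.span ℂ (g '' Set.Iio j) := by
        apply Submodule.sum_mem
        intro i hi
        have hmem : ((ℂ ∙ g i).starProjection (_root_.col A j))
            ∈ (ℂ ∙ g i) := ((ℂ ∙ g i).starProjection_apply_mem (_root_.col A j))
        have himg : g i ∈ g '' Set.Iio j := ⟨i, Finset.mem_Iio.mp hi, rfl⟩
        have hsub : (ℂ ∙ g i) ≤ Submodule.span ℂ (g '' Set.Iio j) :=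
          Submodule.span_mono (Set.singleton_subset_iff.mpr himg)
        exact hsub hmem
      have h2 : Submodule.span ℂ (g '' Set.Iio j) = Submodule.span ℂ (_root_.col A '' Set.Iio j) := by
        rw [hgdef]; exact InnerProductSpace.span_gramSchmidt_Iio ℂ (_root_.col A) j
      have h3 : Submodule.span ℂ (_root_.col A '' Set.Iio j) ≤ Submodule.span ℂ (_root_.col A '' {k | k ≠ j}) := by
        apply Submodule.span_mono
        apply Set.image_mono
        intro i hi
        exact (Set.mem_Iio.mp hi).ne
      exact h3 (h2 ▸ h1)
    have hdist : dcol A j ≤ dist (_root_.col A j) w := Metric.infDist_le_dist_of_mem hwmem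
    have hgw : _root_.col A j - w = g j := by
      have := InnerProductSpace.gramSchmidt_def ℂ (_root_.col A) j
      rw [← hgdef] at this
      rw [hwdef, this]
    rw [dist_eq_norm, hgw] at hdist
    exact hdist
  -- dcol > 0
  have hdpos : ∀ j, 0 < dcol A j := by
    intro j
    have hnotmem : _root_.col A j ∉ (Submodule.span ℂ (_root_.col A '' {k | k ≠ j}) :
        Set (EuclideanSpace ℂ (Fin n))) := by
      intro hmem
      exact hli.notMem_span_image (by simp : j ∉ {k | k ≠ j}) hmem
    have hclosed : IsClosed ((Submodule.span ℂ (_root_.col A '' {k | k ≠ j}) :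
        Submodule ℂ (EuclideanSpace ℂ (Fin n))) : Set (EuclideanSpace ℂ (Fin n))) :=
      Submodule.closed_of_finiteDimensional _
    have hne : ((Submodule.span ℂ (_root_.col A '' {k | k ≠ j}) :
        Submodule ℂ (EuclideanSpace ℂ (Fin n))) : Set (EuclideanSpace ℂ (Fin n))).Nonempty :=
      ⟨0, Submodule.zero_mem _⟩
    rw [dcol]
    exact (hclosed.notMem_iff_infDist_pos hne).mp hnotmem
  -- column sums of R - 1
  have hexpand : ∀ z w : ℂ, ‖z - w‖ ^ 2 = ‖z‖ ^ 2 + ‖w‖ ^ 2 - 2 * (z * (starRingEnd ℂ) w).re := by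
    intro z w
    rw [Complex.sq_norm,
      Complex.sq_norm, Complex.sq_norm, Complex.normSq_sub]
  have hcolsum : ∀ j, ∑ i, ‖(R - 1) i j‖ ^ 2 = 2 * (1 - r j) := by
    intro j
    have h1 : ∀ i, (R - 1) i j = R i j - (1 : Matrix (Fin n) (Fin n) ℂ) i j := fun i => rfl
    calc ∑ i, ‖(R - 1) i j‖ ^ 2
        = ∑ i, (‖R i j‖ ^ 2 + ‖(1 : Matrix (Fin n) (Fin n) ℂ) i j‖ ^ 2
            - 2 * (R i j * (starRingEnd ℂ) ((1 : Matrix (Fin n) (Fin n) ℂ) i j)).re) := by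
          exact Finset.sum_congr rfl fun i _ => by rw [h1 i, hexpand]
      _ = 2 * (1 - r j) := by
          rw [Finset.sum_sub_distrib, Finset.sum_add_distrib, hcolnorm j]
          have h2 : ∑ i, ‖(1 : Matrix (Fin n) (Fin n) ℂ) i j‖ ^ 2 = 1 := by
            rw [Finset.sum_eq_single j]
            · simp [Matrix.one_apply]
            · intro i _ hij
              simp [Matrix.one_apply, hij]
            · intro h; exact absurd (Finset.mem_univ j) h
          have h3 : ∑ i, (2 : ℝ) * (R i j * (starRingEnd ℂ) ((1 : Matrix (Fin n) (Fin n) ℂ) i j)).re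
              = 2 * r j := by
            rw [Finset.sum_eq_single j]
            · rw [hdiag j]
              simp [Matrix.one_apply]
            · intro i _ hij
              simp [Matrix.one_apply, hij]
            · intro h; exact absurd (Finset.mem_univ j) h
          rw [h2, h3]
          ring
  -- Frobenius bound
  set S : ℝ := ∑ j, ∑ i, ‖(R - 1) i j‖ ^ 2 with hSdef
  have hSnonneg : 0 ≤ S := by positivity
  have hS : S ≤ 2 * Phi A := by
    rw [hSdef]
    calc ∑ j, ∑ i, ‖(R - 1) i j‖ ^ 2 = ∑ j, 2 * (1 - r j) := by
          exact Finset.sum_congr rfl fun j _ => hcolsum j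
      _ ≤ ∑ j : Fin n, 2 * (-Real.log (dcol A j)) := by
          apply Finset.sum_le_sum
          intro j _
          have h1 : Real.log (r j) ≤ r j - 1 := Real.log_le_sub_one_of_pos (hrpos j)
          have h2 : Real.log (dcol A j) ≤ Real.log (r j) :=
            Real.log_le_log (hdpos j) (hdle j)
          nlinarith
      _ = 2 * Phi A := by
          rw [Phi, mul_neg, Finset.mul_sum, ← Finset.sum_neg_distrib]
          exact Finset.sum_congr rfl fun j _ => by ring
  have h2Phi : 0 ≤ 2 * Phi A := le_trans hSnonneg hS
  set ε : ℝ := Real.sqrt (2 * Phi A) with hεdef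
  have hε2 : ε ^ 2 = 2 * Phi A := Real.sq_sqrt h2Phi
  have hε0 : 0 ≤ ε := Real.sqrt_nonneg _
  have hε1 : ε < 1 := by
    rw [hεdef]
    rw [show (1:ℝ) = Real.sqrt 1 by simp]
    exact Real.sqrt_lt_sqrt h2Phi hsmall
  -- transfer : ‖A x‖ = ‖R x‖
  have htrans : ∀ x : Fin n → ℂ, ∑ i, ‖(A *ᵥ x) i‖ ^ 2 = ∑ i, ‖(R *ᵥ x) i‖ ^ 2 := by
    intro x
    set u : EuclideanSpace ℂ (Fin n) := WithLp.toLp 2 (fun i => (A *ᵥ x) i) with hudef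
    have hclaim : ∀ i, q.repr u i = (R *ᵥ x) i := by
      intro i
      have h1 : q.repr u i = inner ℂ (q i) u := q.repr_apply_apply u i
      have h2 : ∀ j, R i j = ∑ k, (starRingEnd ℂ) (q i k) * A k j := by
        intro j
        rw [hRdef]
        show q.repr (_root_.col A j) i = _
        rw [q.repr_apply_apply (_root_.col A j) i, PiLp.inner_apply]
        simp only [RCLike.inner_apply']
        rfl
      rw [h1, PiLp.inner_apply]
      simp only [RCLike.inner_apply']
      show ∑ k, (starRingEnd ℂ) (q i k) * (A *ᵥ x) k = _
      calc ∑ k, (starRingEnd ℂ) (q i k) * (A *ᵥ x) k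
          = ∑ k, ∑ j, (starRingEnd ℂ) (q i k) * (A k j * x j) := by
            apply Finset.sum_congr rfl
            intro k _
            rw [show (A *ᵥ x) k = ∑ j, A k j * x j from rfl, Finset.mul_sum]
        _ = ∑ j, ∑ k, (starRingEnd ℂ) (q i k) * (A k j * x j) := Finset.sum_comm
        _ = ∑ j, R i j * x j := by
            apply Finset.sum_congr rfl
            intro j _
            rw [h2 j, Finset.sum_mul]
            apply Finset.sum_congr rfl
            intro k _
            ring
        _ = (R *ᵥ x) i := rfl
    have hrepr : (fun i => (R *ᵥ x) i) = (q.repr u : EuclideanSpace ℂ (Fin n)) := by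
      funext i
      exact (hclaim i).symm
    calc ∑ i, ‖(A *ᵥ x) i‖ ^ 2 = ‖u‖ ^ 2 := (normsq_eq u).symm
      _ = ‖q.repr u‖ ^ 2 := by rw [q.repr.norm_map]
      _ = ∑ i, ‖q.repr u i‖ ^ 2 := normsq_eq _
      _ = ∑ i, ‖(R *ᵥ x) i‖ ^ 2 := by
          exact Finset.sum_congr rfl fun i _ => by rw [hclaim i]
  -- main estimate
  have hmain : ∀ x : Fin n → ℂ, (∑ j, ‖x j‖ ^ 2 = 1) →
      (1 - ε) ^ 2 ≤ ∑ i, ‖(A *ᵥ x) i‖ ^ 2 ∧ ∑ i, ‖(A *ᵥ x) i‖ ^ 2 ≤ (1 + ε) ^ 2 := by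
    intro x hx
    set X : EuclideanSpace ℂ (Fin n) := WithLp.toLp 2 (fun i => x i) with hXdef
    set Y : EuclideanSpace ℂ (Fin n) := WithLp.toLp 2 (fun i => (R *ᵥ x) i) with hYdef
    set Z : EuclideanSpace ℂ (Fin n) := WithLp.toLp 2 (fun i => ((R - 1) *ᵥ x) i) with hZdef
    have hXnorm : ‖X‖ = 1 := by
      have h : ‖X‖ ^ 2 = 1 := by rw [normsq_eq]; exact hx
      nlinarith [norm_nonneg X]
    have hZnorm : ‖Z‖ ≤ ε := by
      have h1 : ‖Z‖ ^ 2 ≤ ε ^ 2 := by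
        rw [normsq_eq]
        calc ∑ i, ‖Z i‖ ^ 2 = ∑ i, ‖((R - 1) *ᵥ x) i‖ ^ 2 := rfl
          _ ≤ S * ∑ j, ‖x j‖ ^ 2 := mulVec_normsq_le _ _
          _ = S := by rw [hx, mul_one]
          _ ≤ 2 * Phi A := hS
          _ = ε ^ 2 := hε2.symm
      have := Real.sqrt_le_sqrt h1
      rwa [Real.sqrt_sq (norm_nonneg Z), Real.sqrt_sq hε0] at this
    have hZYX : Z = Y - X := by
      ext i
      show ((R - 1) *ᵥ x) i = (R *ᵥ x) i - x i
      rw [Matrix.sub_mulVec, Matrix.one_mulVec]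
      rfl
    have hYup : ‖Y‖ ≤ 1 + ε := by
      calc ‖Y‖ = ‖X + Z‖ := by rw [hZYX]; congr 1; abel
        _ ≤ ‖X‖ + ‖Z‖ := norm_add_le _ _
        _ ≤ 1 + ε := by rw [hXnorm]; linarith
    have hYlo : 1 - ε ≤ ‖Y‖ := by
      have h1 : ‖X‖ - ‖Z‖ ≤ ‖Y‖ := by
        have := norm_sub_norm_le X Y
        rw [show X - Y = -Z by rw [hZYX]; abel, norm_neg] at this
        linarith
      rw [hXnorm] at h1
      linarith
    have hAY : ∑ i, ‖(A *ᵥ x) i‖ ^ 2 = ‖Y‖ ^ 2 := by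
      rw [htrans x, normsq_eq Y]
    constructor
    · rw [hAY]
      apply pow_le_pow_left₀ (by linarith) hYlo
    · rw [hAY]
      apply pow_le_pow_left₀ (norm_nonneg Y) hYup
  -- eigenvalue bounds
  set hH := Matrix.isHermitian_conjTranspose_mul_self A with hHdef
  have heig : ∀ i, (1 - ε) ^ 2 ≤ hH.eigenvalues i ∧ hH.eigenvalues i ≤ (1 + ε) ^ 2 := by
    intro i
    have hv : ∑ k, ‖(⇑(hH.eigenvectorBasis i) : Fin n → ℂ) k‖ ^ 2 = 1 := by
      have h := normsq_eq (hH.eigenvectorBasis i)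
      rw [hH.eigenvectorBasis.orthonormal.1 i, one_pow] at h
      exact h.symm
    have := hmain (⇑(hH.eigenvectorBasis i)) hv
    rw [← rayleigh A i] at this
    exact this
  -- conclude
  have hsmax : sMax A ≤ 1 + ε := by
    rw [sMax]
    rw [show (1 + ε) = Real.sqrt ((1 + ε) ^ 2) by rw [Real.sqrt_sq (by linarith)]]
    apply Real.sqrt_le_sqrt
    exact ciSup_le fun i => (heig i).2
  have hsmin : 1 - ε ≤ sMin A := by
    rw [sMin]
    rw [show (1 - ε) = Real.sqrt ((1 - ε) ^ 2) by rw [Real.sqrt_sq (by linarith)]]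
    apply Real.sqrt_le_sqrt
    exact le_ciInf fun i => (heig i).1
  rw [condNum]
  exact div_le_div₀ (by linarith) hsmax (by linarith) hsmin
end

section
/- Define f(x) = x − (1 − exp(−2x/n))²/(2(n−1)²) for n ≥ 2. Then f is concave on the interval [0, (log 2/2)·n], f(x) ≥ 0 and f(x) ≤ x for x ≥ 0, and for x ≥ (log 2/2)·n one has f(x) ≤ x − 1/(8(n−1)²). -/
set_option maxHeartbeats 1600000 in
theorem stmt15 {n : ℕ} (hn : 2 ≤ n)
    (f : ℝ → ℝ)
    (hf : ∀ x, f x = x - (1 - Real.exp (-2 * x / n)) ^ 2 / (2 * ((n : ℝ) - 1) ^ 2)) :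
    ConcaveOn ℝ (Set.Icc 0 (Real.log 2 / 2 * n)) f ∧
      (∀ x ≥ (0 : ℝ), 0 ≤ f x ∧ f x ≤ x) ∧
      (∀ x ≥ Real.log 2 / 2 * (n : ℝ), f x ≤ x - 1 / (8 * ((n : ℝ) - 1) ^ 2)) := by
  have hfe : f = fun x => x - (1 - Real.exp (-2 * x / n)) ^ 2 / (2 * ((n : ℝ) - 1) ^ 2) :=
    funext hf
  subst hfe
  have hn1 : (2 : ℝ) ≤ (n : ℝ) := by exact_mod_cast hn
  have hnpos : (0 : ℝ) < n := by linarith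
  have hn1pos : (0 : ℝ) < (n : ℝ) - 1 := by linarith
  have hcpos : (0 : ℝ) < 2 * ((n : ℝ) - 1) ^ 2 := by positivity
  set c : ℝ := 2 * ((n : ℝ) - 1) ^ 2 with hc
  have he : ∀ x : ℝ, HasDerivAt (fun y : ℝ => Real.exp (-2 * y / n))
      (Real.exp (-2 * x / n) * (-2 / n)) x := by
    intro x
    have h1 : HasDerivAt (fun y : ℝ => -2 * y / (n : ℝ)) (-2 / n) x := by
      simpa using ((hasDerivAt_id x).const_mul (-2 : ℝ)).div_const (n : ℝ)
    simpa [Function.comp_def] using (Real.hasDerivAt_exp (-2 * x / n)).comp x h1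
  have hd1 : ∀ x : ℝ, HasDerivAt (fun y : ℝ => y - (1 - Real.exp (-2 * y / n)) ^ 2 / c)
      (1 - (2 * (1 - Real.exp (-2 * x / n)) ^ 1 * (0 - Real.exp (-2 * x / n) * (-2 / n))) / c)
      x := by
    intro x
    simpa [Pi.sub_def] using
      (hasDerivAt_id x).sub ((((hasDerivAt_const x (1 : ℝ)).sub (he x)).pow 2).div_const c)
  have hderiv1 : deriv (fun y : ℝ => y - (1 - Real.exp (-2 * y / n)) ^ 2 / c)
      = fun x => 1 - (2 * (1 - Real.exp (-2 * x / n)) ^ 1 *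
        (0 - Real.exp (-2 * x / n) * (-2 / n))) / c := funext fun x => (hd1 x).deriv
  have hd2 : ∀ x : ℝ, HasDerivAt (fun y : ℝ => 1 - (2 * (1 - Real.exp (-2 * y / n)) ^ 1 *
        (0 - Real.exp (-2 * y / n) * (-2 / n))) / c)
      (0 - ((2 * (1 * (1 - Real.exp (-2 * x / n)) ^ 0 * (0 - Real.exp (-2 * x / n) * (-2 / n)))) *
          (0 - Real.exp (-2 * x / n) * (-2 / n)) +
        (2 * (1 - Real.exp (-2 * x / n)) ^ 1) *
          (0 - Real.exp (-2 * x / n) * (-2 / n) * (-2 / n))) / c) x := by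
    intro x
    have hp : HasDerivAt (fun y : ℝ => 2 * (1 - Real.exp (-2 * y / n)) ^ 1)
        (2 * (1 * (1 - Real.exp (-2 * x / n)) ^ 0 * (0 - Real.exp (-2 * x / n) * (-2 / n)))) x := by
      have := ((((hasDerivAt_const x (1 : ℝ)).sub (he x)).pow 1)).const_mul 2
      convert this using 2
      norm_num
      · rfl
      · rfl
      · simp
      · simp
    have hq : HasDerivAt (fun y : ℝ => 0 - Real.exp (-2 * y / n) * (-2 / n))
        (0 - Real.exp (-2 * x / n) * (-2 / n) * (-2 / n)) x :=
      (hasDerivAt_const x (0 : ℝ)).sub ((he x).mul_const (-2 / n))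
    exact (hasDerivAt_const x (1 : ℝ)).sub ((hp.mul hq).div_const c)
  refine ⟨?_, ?_, ?_⟩
  · -- concavity
    apply concaveOn_of_deriv2_nonpos (convex_Icc _ _)
    · exact Continuous.continuousOn (by continuity)
    · exact fun x _ => ((hd1 x).differentiableAt).differentiableWithinAt
    · intro x _
      rw [hderiv1]
      exact ((hd2 x).differentiableAt).differentiableWithinAt
    · intro x hx
      rw [interior_Icc] at hx
      have hxL : x < Real.log 2 / 2 * n := hx.2
      have hu : (1 : ℝ) / 2 ≤ Real.exp (-2 * x / n) := by
        have hle : Real.exp (2 * x / n) ≤ 2 := by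
          calc Real.exp (2 * x / n) ≤ Real.exp (Real.log 2) := by
                apply Real.exp_le_exp.mpr
                rw [div_le_iff₀ hnpos]
                nlinarith [Real.log_pos one_lt_two]
            _ = 2 := Real.exp_log two_pos
        rw [show (-2 : ℝ) * x / n = -(2 * x / n) by ring, Real.exp_neg]
        calc (1 : ℝ) / 2 = 2⁻¹ := by norm_num
          _ ≤ (Real.exp (2 * x / n))⁻¹ := by
              apply inv_anti₀ (Real.exp_pos _) hle
      simp only [Function.iterate_succ, Function.iterate_zero, Function.comp_apply, id_eq]
      rw [hderiv1, (hd2 x).deriv]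
      set E := Real.exp (-2 * x / n) with hE
      have hEpos : 0 < E := Real.exp_pos _
      have key : 0 ≤ (2 * (1 * (1 - E) ^ 0 * (0 - E * (-2 / n)))) * (0 - E * (-2 / n)) +
          (2 * (1 - E) ^ 1) * (0 - E * (-2 / n) * (-2 / n)) := by
        simp only [pow_zero, pow_one, mul_one, one_mul, zero_sub, neg_mul, neg_neg]
        have hprod : (0 : ℝ) ≤ (2 * E - 1) * E * ((-2 / (n:ℝ)) * (-2 / (n:ℝ))) :=
          mul_nonneg (mul_nonneg (by linarith) hEpos.le) (mul_self_nonneg _)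
        nlinarith [hprod]
      have h0 : 0 ≤ ((2 * (1 * (1 - E) ^ 0 * (0 - E * (-2 / n)))) * (0 - E * (-2 / n)) +
          (2 * (1 - E) ^ 1) * (0 - E * (-2 / n) * (-2 / n))) / c := div_nonneg key hcpos.le
      linarith
  · -- 0 ≤ f ≤ x on [0, ∞)
    intro x hx
    set E := Real.exp (-2 * x / n) with hE
    have hEpos : 0 < E := Real.exp_pos _
    have hE1 : E ≤ 1 := Real.exp_le_one_iff.mpr (by
      rw [div_nonpos_iff]; right; constructor <;> nlinarith)
    have harg : (-2 * x / n : ℝ) = -(2 * x / n) := by ring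
    have hC : 1 - E ≤ 2 * x / n := by
      have := Real.add_one_le_exp (-(2 * x / n))
      rw [hE, harg]; linarith
    have hC' : (1 - E) * n ≤ 2 * x := by
      have := (le_div_iff₀ hnpos).mp hC; linarith
    have h1 : (1 - E) ^ 2 ≤ 1 - E := by nlinarith
    have hn2 : (0 : ℝ) ≤ (n : ℝ) - 2 := by linarith
    have h2 : 1 - E ≤ x := by nlinarith [mul_nonneg (sub_nonneg.mpr hE1) hn2]
    have hnum : (1 - E) ^ 2 ≤ c * x := by
      rw [hc]
      have hcc : (0 : ℝ) ≤ 2 * ((n : ℝ) - 1) ^ 2 - 1 := by nlinarith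
      nlinarith [mul_nonneg hcc hx]
    have hdiv : (1 - E) ^ 2 / c ≤ x := by
      rw [div_le_iff₀ hcpos]; linarith
    have hdiv0 : 0 ≤ (1 - E) ^ 2 / c := by positivity
    constructor
    · show 0 ≤ x - (1 - Real.exp (-2 * x / n)) ^ 2 / c
      rw [← hE]; linarith
    · show x - (1 - Real.exp (-2 * x / n)) ^ 2 / c ≤ x
      rw [← hE]; linarith
  · -- upper bound for large x
    intro x hx
    set E := Real.exp (-2 * x / n) with hE
    have hEpos : 0 < E := Real.exp_pos _
    have hu : E ≤ 1 / 2 := by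
      have hge : (2 : ℝ) ≤ Real.exp (2 * x / n) := by
        calc (2 : ℝ) = Real.exp (Real.log 2) := (Real.exp_log two_pos).symm
          _ ≤ Real.exp (2 * x / n) := by
              apply Real.exp_le_exp.mpr
              rw [le_div_iff₀ hnpos]
              nlinarith [Real.log_pos one_lt_two]
      rw [hE, show (-2 : ℝ) * x / n = -(2 * x / n) by ring, Real.exp_neg]
      calc (Real.exp (2 * x / n))⁻¹ ≤ 2⁻¹ := inv_anti₀ (by norm_num) hge
        _ = 1 / 2 := by norm_num
    have h14 : (1 : ℝ) / 4 ≤ (1 - E) ^ 2 := by nlinarith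
    have hkey : 1 / (8 * ((n : ℝ) - 1) ^ 2) ≤ (1 - E) ^ 2 / c := by
      rw [div_le_div_iff₀ (by positivity) hcpos, hc]
      have h8 : (0 : ℝ) ≤ 8 * ((n : ℝ) - 1) ^ 2 := by positivity
      nlinarith [mul_le_mul_of_nonneg_left h14 h8]
    show x - (1 - Real.exp (-2 * x / n)) ^ 2 / c ≤ x - 1 / (8 * ((n : ℝ) - 1) ^ 2)
    rw [← hE]; linarith
end
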